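/- arXiv:1212.4178 — 5 statements merged into one kernel-verified Lean document; each statement's English description precedes it below -/
import Mathlib

section
/- Let m ≥ 1 be a natural number and let ϖ_m = 2∫_0^1 (1-t^m)^(-1/2) dt. Then the infinite product ∏_{n=1}^∞ (2n(2mn+m+2))/((2n+1)(2mn+2)) converges, and ϖ_m = (2(m+2)/m) · ∏_{n=1}^∞ (2n(2mn+m+2))/((2n+1)(2mn+2)). -/
/-!
Substituting `x = t ^ m` turns `∫₀¹ (1 - t ^ m) ^ (-1/2) dt` into `B(1/m, 1/2) / m`.  Euler's limit
formula `Γ(s) = lim n ^ s n! / (s (s + 1) ⋯ (s + n))` applied to the three Gamma factors of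
`B(a, b) = Γ(a) Γ(b) / Γ(a + b)` writes the Beta function as an infinite product; at
`a = 1/m, b = 1/2` its factors are those of the clover product.
-/

open Filter Topology MeasureTheory Set

lemma integral_rpow_mul_one_sub_rpow_eq_beta {a b : ℝ} (ha : 0 < a) (hb : 0 < b) :
    ∫ x in (0:ℝ)..1, x ^ (a - 1) * (1 - x) ^ (b - 1) = ProbabilityTheory.beta a b := by
  rw [ProbabilityTheory.beta_eq_betaIntegralReal a b ha hb, Complex.betaIntegral,
    ← Complex.ofReal_re (∫ x in (0:ℝ)..1, _), ← intervalIntegral.integral_ofReal]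
  congr 1
  refine intervalIntegral.integral_congr fun x hx => ?_
  rw [uIcc_of_le zero_le_one] at hx
  push_cast
  rw [Complex.ofReal_cpow hx.1, Complex.ofReal_cpow (sub_nonneg.2 hx.2)]
  push_cast
  rfl

lemma image_pow_Ioo_zero_one {m : ℕ} (hm : m ≠ 0) :
    (fun t : ℝ => t ^ m) '' Ioo 0 1 = Ioo 0 1 := by
  have := (continuous_pow m).continuousOn.image_Ioo_of_strictMonoOn (zero_le_one' ℝ)
    ((pow_left_strictMonoOn₀ hm).mono Icc_subset_Ici_self)
  simpa [zero_pow hm] using this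

lemma integral_rpow_inv_sub_one_mul_eq_mul_integral_comp_pow {m : ℕ} (hm : m ≠ 0) (g : ℝ → ℝ) :
    ∫ x in (0:ℝ)..1, x ^ ((m : ℝ)⁻¹ - 1) * g x = m * ∫ t in (0:ℝ)..1, g (t ^ m) := by
  have key := integral_image_eq_integral_abs_deriv_smul measurableSet_Ioo
    (s := Ioo 0 1) (fun t _ => (hasDerivAt_pow m t).hasDerivWithinAt)
    ((pow_left_strictMonoOn₀ hm).injOn.mono fun t ht => ht.1.le)
    (fun x : ℝ => x ^ ((m : ℝ)⁻¹ - 1) * g x)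
  rw [image_pow_Ioo_zero_one hm] at key
  simp only [intervalIntegral.integral_of_le zero_le_one, integral_Ioc_eq_integral_Ioo, key,
    ← integral_const_mul]
  refine setIntegral_congr_fun measurableSet_Ioo fun t ht => ?_
  have hpow : t ^ (m - 1) * (t ^ m) ^ ((m : ℝ)⁻¹ - 1) = 1 := by
    rw [← Real.rpow_natCast, ← Real.rpow_natCast, ← Real.rpow_mul ht.1.le, ← Real.rpow_add ht.1,
      Nat.cast_sub (Nat.one_le_iff_ne_zero.2 hm)]
    field_simp
    simp
  simp only [smul_eq_mul, abs_of_pos (show 0 < (m : ℝ) * t ^ (m - 1) by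
    have := ht.1; positivity)]
  linear_combination (m * g (t ^ m)) * hpow

lemma integral_one_sub_pow_rpow_neg_half {m : ℕ} (hm : m ≠ 0) :
    ∫ t in (0:ℝ)..1, (1 - t ^ m) ^ (-(1/2) : ℝ) = ProbabilityTheory.beta (m : ℝ)⁻¹ (1/2) / m := by
  have hm' : (m : ℝ) ≠ 0 := by exact_mod_cast hm
  have hbeta := integral_rpow_mul_one_sub_rpow_eq_beta (inv_pos.2 (Nat.cast_pos.2
    (Nat.pos_of_ne_zero hm))) one_half_pos
  rw [show (1/2 : ℝ) - 1 = -(1/2) by norm_num,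
    integral_rpow_inv_sub_one_mul_eq_mul_integral_comp_pow hm] at hbeta
  rw [← hbeta]
  field_simp

section BetaProduct

open Finset

lemma Real.GammaSeq_mul_GammaSeq_div_GammaSeq {a b : ℝ} (ha : 0 < a) (hb : 0 < b) {N : ℕ}
    (hN : N ≠ 0) :
    Real.GammaSeq a N * Real.GammaSeq b N / Real.GammaSeq (a + b) N
      = (a + b) / (a * b) * ∏ n ∈ Icc 1 N, n * (a + b + n) / ((a + n) * (b + n)) := by
  have hpow : (N : ℝ) ^ (a + b) = (N : ℝ) ^ a * (N : ℝ) ^ b :=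
    Real.rpow_add (by positivity) a b
  have hfac : (N.factorial : ℝ) = ∏ n ∈ Icc 1 N, (n : ℝ) := by
    rw [← Finset.Ico_add_one_right_eq_Icc, ← prod_Ico_id_eq_factorial, Nat.cast_prod]
  simp only [Real.GammaSeq, prod_range_eq_mul_Ico _ N.add_one_pos, Finset.Ico_add_one_right_eq_Icc,
    prod_div_distrib, prod_mul_distrib, hpow, hfac, Nat.cast_zero, add_zero]
  have hprod : ∀ c : ℝ, 0 < c → ∏ n ∈ Icc 1 N, (c + n) ≠ 0 := fun c hc =>
    prod_ne_zero_iff.2 fun n _ => by positivity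
  have hprod_a := hprod a ha
  have hprod_b := hprod b hb
  have hprod_ab := hprod (a + b) (add_pos ha hb)
  have hfac_ne : ∏ n ∈ Icc 1 N, (n : ℝ) ≠ 0 := prod_ne_zero_iff.2 fun n hn => by
    have := (mem_Icc.1 hn).1; positivity
  have hpow_a : (N : ℝ) ^ a ≠ 0 := by positivity
  have hpow_b : (N : ℝ) ^ b ≠ 0 := by positivity
  field_simp

lemma tendsto_prod_beta {a b : ℝ} (ha : 0 < a) (hb : 0 < b) :
    Tendsto (fun N : ℕ => (a + b) / (a * b) * ∏ n ∈ Icc 1 N, n * (a + b + n) / ((a + n) * (b + n)))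
      atTop (𝓝 (ProbabilityTheory.beta a b)) := by
  have hlim := ((Real.GammaSeq_tendsto_Gamma a).mul (Real.GammaSeq_tendsto_Gamma b)).div
    (Real.GammaSeq_tendsto_Gamma (a + b)) (Real.Gamma_pos_of_pos (add_pos ha hb)).ne'
  refine hlim.congr' ?_
  filter_upwards [eventually_ne_atTop 0] with N hN
    using Real.GammaSeq_mul_GammaSeq_div_GammaSeq ha hb hN

end BetaProduct

/-- **A Wallis product on clovers.**
For a natural number `m ≥ 1`, let `ϖ = 2 ∫_0^1 (1 - t^m)^(-1/2) dt` (the arc length of the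
principal leaf of the `m`-clover).  Then the partial products of
`∏_{n=1}^∞ (2n(2mn + m + 2)) / ((2n+1)(2mn+2))`, multiplied by `2(m+2)/m`, converge to `ϖ`. -/
theorem wallis_product_on_clovers (m : ℕ) (hm : 1 ≤ m)
    (ϖ : ℝ) (hϖ : ϖ = 2 * ∫ t in (0:ℝ)..1, (1 - t ^ m) ^ (-(1/2) : ℝ)) :
    Tendsto (fun N : ℕ =>
        (2 * (m + 2) / m : ℝ) *
          ∏ n ∈ Finset.Icc 1 N,
            ((2 * n * (2 * m * n + m + 2) : ℝ) / ((2 * n + 1) * (2 * m * n + 2))))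
      atTop (𝓝 ϖ) := by
  have hm0 : (0 : ℝ) < m := by exact_mod_cast hm
  have hconst : (2 * (m + 2) / m : ℝ) = 2 / m * (((m : ℝ)⁻¹ + 1/2) / ((m : ℝ)⁻¹ * (1/2))) := by
    field_simp
    ring
  have hfactor : ∀ n : ℕ, (2 * n * (2 * m * n + m + 2) : ℝ) / ((2 * n + 1) * (2 * m * n + 2))
      = n * ((m : ℝ)⁻¹ + 1/2 + n) / (((m : ℝ)⁻¹ + n) * (1/2 + n)) := by
    intro n
    field_simp
    ring
  have hlim := (tendsto_prod_beta (inv_pos.2 hm0) one_half_pos).const_mul (2 / (m : ℝ))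
  convert hlim using 2 with N
  · rw [hconst, mul_assoc]
    simp only [hfactor]
  · rw [hϖ, integral_one_sub_pow_rpow_neg_half (by omega)]
    ring
end

section
/- Let m ≥ 1 be a natural number and let ϖ_m = 2∫_0^1 (1-t^m)^(-1/2) dt. Define the congruence Gamma function Γ_M(n,k) for a natural number M ≥ 1, n ≥ 0 and 0 ≤ k < M by Γ_M(0,k) = 1, Γ_M(1,0) = 1, and Γ_M(n+1,k) = (Mn+k)·Γ_M(n,k). Then ϖ_m = lim_{n→∞} (Γ_2(n,0)·Γ_{2m}(n,m+2))/(Γ_2(n,1)·Γ_{2m}(n,2)) · (4/m). -/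
open Filter Topology MeasureTheory Set Real Nat

/-! For `k ≠ 0`, `Γ_M(n, k) = M^n (k/M)(k/M + 1)⋯(k/M + n - 1)`, while `Γ_M(n+1, 0) = M^n n!`.
Hence the `(n+1)`-st term of the sequence is `2/m` times `n! (a+b)⋯(a+b+n) / (a⋯(a+n) · b⋯(b+n))`
with `a = 1/m`, `b = 1/2`. This is the quotient `GammaSeq a n · GammaSeq b n / GammaSeq (a+b) n`
of Euler's limit formula, so it converges to `B(1/m, 1/2) = Γ(a) Γ(b) / Γ(a+b)`. On the other hand
the substitution `u = t^m` gives `ϖ_m = (2/m) ∫_0^1 u^(1/m - 1) (1 - u)^(-1/2) du = (2/m) B(1/m, 1/2)`.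
-/

/-- The congruence Gamma function `Γ_M(n, k)`, defined recursively by
`Γ_M(0, k) = 1`, `Γ_M(1, 0) = 1`, and `Γ_M(n+1, k) = (M n + k) Γ_M(n, k)`. -/
noncomputable def congGamma (M : ℕ) : ℕ → ℕ → ℝ
  | 0, _ => 1
  | n + 1, k => if n = 0 ∧ k = 0 then 1 else ((M * n + k : ℕ) : ℝ) * congGamma M n k

theorem congGamma_succ_zero (M n : ℕ) : congGamma M (n + 1) 0 = (M : ℝ) ^ n * n ! := by
  induction n with
  | zero => simp [congGamma]
  | succ n ih =>
    rw [congGamma, if_neg (by simp), ih]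
    push_cast [Nat.factorial_succ]
    ring

theorem congGamma_eq_pow_mul_prod {M k : ℕ} (hM : M ≠ 0) (hk : k ≠ 0) (n : ℕ) :
    congGamma M n k = (M : ℝ) ^ n * ∏ j ∈ Finset.range n, ((k : ℝ) / M + j) := by
  induction n with
  | zero => simp [congGamma]
  | succ n ih =>
    rw [congGamma, if_neg (by tauto), ih, Finset.prod_range_succ]
    push_cast
    field_simp
    ring

noncomputable def betaSeq (a b : ℝ) (n : ℕ) : ℝ :=
  n ! * (∏ j ∈ Finset.range (n + 1), (a + b + j)) /
    ((∏ j ∈ Finset.range (n + 1), (a + j)) * ∏ j ∈ Finset.range (n + 1), (b + j))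

theorem betaSeq_eq_GammaSeq {a b : ℝ} (ha : 0 < a) (hb : 0 < b) {n : ℕ} (hn : n ≠ 0) :
    betaSeq a b n = GammaSeq a n * GammaSeq b n / GammaSeq (a + b) n := by
  have hn' : (0 : ℝ) < n := by positivity
  rw [betaSeq, GammaSeq, GammaSeq, GammaSeq, rpow_add hn']
  field_simp

theorem tendsto_betaSeq {a b : ℝ} (ha : 0 < a) (hb : 0 < b) :
    Tendsto (betaSeq a b) atTop (𝓝 (ProbabilityTheory.beta a b)) := by
  have hGamma := ((GammaSeq_tendsto_Gamma a).mul (GammaSeq_tendsto_Gamma b)).div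
    (GammaSeq_tendsto_Gamma (a + b)) (Gamma_pos_of_pos (add_pos ha hb)).ne'
  refine hGamma.congr' ?_
  filter_upwards [eventually_ne_atTop 0] with n hn
  exact (betaSeq_eq_GammaSeq ha hb hn).symm

theorem integral_rpow_mul_one_sub_rpow {a b : ℝ} (ha : 0 < a) (hb : 0 < b) :
    ∫ x in (0 : ℝ)..1, x ^ (a - 1) * (1 - x) ^ (b - 1) = ProbabilityTheory.beta a b := by
  rw [ProbabilityTheory.beta_eq_betaIntegralReal a b ha hb, ← Complex.ofReal_re (∫ x in _.._, _),
    ← intervalIntegral.integral_ofReal, Complex.betaIntegral]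
  congr 1
  refine intervalIntegral.integral_congr fun x hx => ?_
  rw [uIcc_of_le zero_le_one] at hx
  push_cast [Complex.ofReal_cpow hx.1, Complex.ofReal_cpow (sub_nonneg.2 hx.2)]
  rfl

theorem integral_comp_pow {E : Type*} [NormedAddCommGroup E] [NormedSpace ℝ E] (g : ℝ → E)
    {m : ℕ} (hm : m ≠ 0) :
    ∫ t in (0 : ℝ)..1, g (t ^ m) = (m : ℝ)⁻¹ • ∫ u in (0 : ℝ)..1, u ^ ((m : ℝ)⁻¹ - 1) • g u := by
  have hmono : StrictMonoOn (fun t : ℝ => t ^ m) (Ici 0) := pow_left_strictMonoOn₀ hm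
  have himage : (fun t : ℝ => t ^ m) '' Ioc 0 1 = Ioc 0 1 := by
    simpa [zero_pow hm] using (continuous_pow m).continuousOn.image_Ioc_of_strictMonoOn
      zero_le_one (hmono.mono Icc_subset_Ici_self)
  have hsubst := integral_image_eq_integral_abs_deriv_smul (measurableSet_Ioc (a := 0) (b := 1))
    (fun t _ => (hasDerivAt_pow m t).hasDerivWithinAt)
    (hmono.injOn.mono fun t ht => le_of_lt ht.1) fun u => u ^ ((m : ℝ)⁻¹ - 1) • g u
  rw [himage] at hsubst
  rw [intervalIntegral.integral_of_le zero_le_one, intervalIntegral.integral_of_le zero_le_one,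
    hsubst, ← integral_smul]
  refine setIntegral_congr_fun measurableSet_Ioc fun t ht => ?_
  have ht0 : 0 < t := ht.1
  have hpow : (t ^ m) ^ ((m : ℝ)⁻¹ - 1) = t / t ^ m := by
    rw [rpow_sub_one (pow_ne_zero m ht0.ne'), pow_rpow_inv_natCast ht0.le hm]
  have hjac : (m : ℝ)⁻¹ * (|m * t ^ (m - 1)| * (t / t ^ m)) = 1 := by
    rw [abs_of_nonneg (by positivity)]
    field_simp
    exact pow_sub_one_mul hm t
  simp only [smul_smul, hpow, ← mul_assoc] at hjac ⊢
  rw [hjac, one_smul]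

theorem congGamma_clover_ratio_succ {m : ℕ} (hm : m ≠ 0) (n : ℕ) :
    congGamma 2 (n + 1) 0 * congGamma (2 * m) (n + 1) (m + 2) /
        (congGamma 2 (n + 1) 1 * congGamma (2 * m) (n + 1) 2) * (4 / m) =
      2 / m * betaSeq (m : ℝ)⁻¹ (1 / 2) n := by
  have hm' : (m : ℝ) ≠ 0 := Nat.cast_ne_zero.2 hm
  have h2m : 2 * m ≠ 0 := by omega
  have hhalf : ((1 : ℕ) : ℝ) / (2 : ℕ) = 1 / 2 := by norm_num
  have hinv : ((2 : ℕ) : ℝ) / (2 * m : ℕ) = (m : ℝ)⁻¹ := by push_cast; field_simp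
  have hsum : ((m + 2 : ℕ) : ℝ) / (2 * m : ℕ) = (m : ℝ)⁻¹ + 1 / 2 := by push_cast; field_simp; ring
  rw [congGamma_succ_zero, congGamma_eq_pow_mul_prod two_ne_zero one_ne_zero,
    congGamma_eq_pow_mul_prod h2m (by omega : m + 2 ≠ 0),
    congGamma_eq_pow_mul_prod h2m two_ne_zero, hhalf, hinv, hsum, betaSeq]
  field_simp
  ring

/-- For `m ≥ 1` and `ϖ = 2 ∫_0^1 (1 - t^m)^(-1/2) dt`, we have
`ϖ = lim_{n → ∞} (Γ_2(n,0) Γ_{2m}(n, m+2)) / (Γ_2(n,1) Γ_{2m}(n,2)) · (4/m)`. -/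
theorem clover_constant_as_limit (m : ℕ) (hm : 1 ≤ m)
    (ϖ : ℝ) (hϖ : ϖ = 2 * ∫ t in (0:ℝ)..1, (1 - t ^ m) ^ (-(1/2) : ℝ)) :
    Tendsto (fun n : ℕ =>
        congGamma 2 n 0 * congGamma (2 * m) n (m + 2) /
          (congGamma 2 n 1 * congGamma (2 * m) n 2) * (4 / m))
      atTop (𝓝 ϖ) := by
  have hm0 : m ≠ 0 := by omega
  have hϖ_beta : ϖ = 2 / m * ProbabilityTheory.beta (m : ℝ)⁻¹ (1 / 2) := by
    have hexp : (1 / 2 : ℝ) - 1 = -(1 / 2) := by norm_num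
    rw [hϖ, integral_comp_pow (fun u => (1 - u) ^ (-(1 / 2) : ℝ)) hm0]
    simp only [smul_eq_mul, ← hexp]
    rw [integral_rpow_mul_one_sub_rpow (by positivity) (by norm_num)]
    ring
  rw [← tendsto_add_atTop_iff_nat 1, hϖ_beta]
  exact ((tendsto_betaSeq (by positivity) (by norm_num)).const_mul _).congr fun n =>
    (congGamma_clover_ratio_succ hm0 n).symm
end

section
/- Let m ≥ 1 be a natural number, ϖ_m = 2∫_0^1 (1-t^m)^(-1/2) dt, and let φ : ℝ → ℝ satisfy: x = ∫_0^{φ(x)} (1-t^m)^(-1/2) dt and 0 ≤ φ(x) ≤ 1 for all x ∈ [0, ϖ_m/2], and φ(ϖ_m - x) = φ(x) for all x ∈ [0, ϖ_m]. Then for every x in the open interval (0, ϖ_m), φ is differentiable at x and φ(x)^m + (φ'(x))^2 = 1. -/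
/-!
On `[0, ϖ/2]` the clover function is the inverse of the strictly increasing arc length
`l(r) = ∫_0^r (1 - t^m)^(-1/2) dt`, so the inverse function rule gives
`φ' = 1 / l'(φ) = √(1 - φ^m)` on `(0, ϖ/2)`. As `x → ϖ/2` from the left, `φ → 1` and hence
`φ' → 0`, which makes `0` the left derivative at `ϖ/2`. The symmetry `φ(ϖ - x) = φ(x)` turns
this into a two-sided derivative at `ϖ/2` and gives `φ' = -√(1 - φ^m)` on `(ϖ/2, ϖ)`.
-/

open MeasureTheory Set Filter Topology

section RightInverse

variable {F φ : ℝ → ℝ} {a b : ℝ}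

theorem StrictMonoOn.strictMonoOn_of_rightInvOn {s t : Set ℝ} (hF : StrictMonoOn F s)
    (hmaps : MapsTo φ t s) (hinv : RightInvOn φ F t) : StrictMonoOn φ t := by
  intro x hx y hy hxy
  rwa [← hF.lt_iff_lt (hmaps hx) (hmaps hy), hinv hx, hinv hy]

theorem StrictMonoOn.leftInvOn_of_rightInvOn (hF : StrictMonoOn F (Icc a b))
    (hmaps : MapsTo φ (Icc (F a) (F b)) (Icc a b)) (hinv : RightInvOn φ F (Icc (F a) (F b))) :
    LeftInvOn φ F (Icc a b) := fun _ hr =>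
  hF.injOn (hmaps (hF.monotoneOn.mapsTo_Icc hr)) hr (hinv (hF.monotoneOn.mapsTo_Icc hr))

theorem StrictMonoOn.image_Icc_of_rightInvOn (hF : StrictMonoOn F (Icc a b))
    (hmaps : MapsTo φ (Icc (F a) (F b)) (Icc a b)) (hinv : RightInvOn φ F (Icc (F a) (F b))) :
    φ '' Icc (F a) (F b) = Icc a b :=
  hmaps.image_subset.antisymm
    ((hF.leftInvOn_of_rightInvOn hmaps hinv).surjOn hF.monotoneOn.mapsTo_Icc)

theorem StrictMonoOn.mapsTo_Ioo_of_rightInvOn (hF : StrictMonoOn F (Icc a b))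
    (hmaps : MapsTo φ (Icc (F a) (F b)) (Icc a b)) (hinv : RightInvOn φ F (Icc (F a) (F b))) :
    MapsTo φ (Ioo (F a) (F b)) (Ioo a b) := by
  intro x hx
  have hφ := hF.strictMonoOn_of_rightInvOn hmaps hinv
  have hFab : F a ≤ F b := hx.1.le.trans hx.2.le
  exact ⟨(hmaps (left_mem_Icc.2 hFab)).1.trans_lt
      (hφ (left_mem_Icc.2 hFab) (Ioo_subset_Icc_self hx) hx.1),
    (hφ (Ioo_subset_Icc_self hx) (right_mem_Icc.2 hFab) hx.2).trans_le
      (hmaps (right_mem_Icc.2 hFab)).2⟩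

theorem StrictMonoOn.continuousAt_of_rightInvOn (hF : StrictMonoOn F (Icc a b))
    (hmaps : MapsTo φ (Icc (F a) (F b)) (Icc a b)) (hinv : RightInvOn φ F (Icc (F a) (F b)))
    {x : ℝ} (hx : x ∈ Ioo (F a) (F b)) : ContinuousAt φ x := by
  obtain ⟨hφa, hφb⟩ := hF.mapsTo_Ioo_of_rightInvOn hmaps hinv hx
  refine (hF.strictMonoOn_of_rightInvOn hmaps hinv).continuousAt_of_image_mem_nhds
    (Icc_mem_nhds hx.1 hx.2) ?_
  rw [hF.image_Icc_of_rightInvOn hmaps hinv]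
  exact Icc_mem_nhds hφa hφb

theorem StrictMonoOn.continuousWithinAt_Iic_of_rightInvOn (hF : StrictMonoOn F (Icc a b))
    (hmaps : MapsTo φ (Icc (F a) (F b)) (Icc a b)) (hinv : RightInvOn φ F (Icc (F a) (F b)))
    (hab : a < b) : ContinuousWithinAt φ (Iic (F b)) (F b) := by
  have hFab : F a < F b := hF (left_mem_Icc.2 hab.le) (right_mem_Icc.2 hab.le) hab
  refine (hF.strictMonoOn_of_rightInvOn hmaps hinv).continuousWithinAt_left_of_image_mem_nhdsWithin
    (Icc_mem_nhdsLE hFab) ?_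
  rw [hF.image_Icc_of_rightInvOn hmaps hinv,
    hF.leftInvOn_of_rightInvOn hmaps hinv (right_mem_Icc.2 hab.le)]
  exact Icc_mem_nhdsLE hab

theorem StrictMonoOn.hasDerivAt_of_rightInvOn (hF : StrictMonoOn F (Icc a b))
    (hmaps : MapsTo φ (Icc (F a) (F b)) (Icc a b)) (hinv : RightInvOn φ F (Icc (F a) (F b)))
    {x F' : ℝ} (hx : x ∈ Ioo (F a) (F b)) (hF' : HasDerivAt F F' (φ x)) (hF'0 : F' ≠ 0) :
    HasDerivAt φ F'⁻¹ x :=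
  hF'.of_local_left_inverse (hF.continuousAt_of_rightInvOn hmaps hinv hx) hF'0
    (eventually_of_mem (Ioo_mem_nhds hx.1 hx.2) fun _ hy => hinv (Ioo_subset_Icc_self hy))

end RightInverse

section Reflection

variable {g : ℝ → ℝ} {a : ℝ}

theorem HasDerivAt.of_reflection {g' x : ℝ} (hg : HasDerivAt g g' (a - x))
    (hsymm : ∀ᶠ y in 𝓝 x, g (a - y) = g y) : HasDerivAt g (-g') x := by
  have hcomp := hg.comp x ((hasDerivAt_id x).const_sub a)
  rw [mul_neg_one] at hcomp
  exact hcomp.congr_of_eventuallyEq (hsymm.mono fun y hy => hy.symm)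

theorem hasDerivAt_zero_of_reflection (hg : HasDerivWithinAt g 0 (Iic (a / 2)) (a / 2))
    (hsymm : ∀ᶠ y in 𝓝 (a / 2), g (a - y) = g y) : HasDerivAt g 0 (a / 2) := by
  have hright : HasDerivWithinAt (g ∘ (a - ·)) (0 * -1) (Ici (a / 2)) (a / 2) :=
    hg.comp_of_eq (a / 2) ((hasDerivAt_id _).const_sub a).hasDerivWithinAt
      (fun y hy => by rw [mem_Ici] at hy; rw [mem_Iic]; linarith) (by ring)
  rw [zero_mul] at hright
  have hright' : HasDerivWithinAt g 0 (Ici (a / 2)) (a / 2) :=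
    hright.congr_of_eventuallyEq
      (eventually_nhdsWithin_of_eventually_nhds (hsymm.mono fun _ hy => hy.symm))
      (by simp only [Function.comp_apply]; ring_nf)
  simpa using hg.union hright'

end Reflection

namespace Clover

noncomputable def arcLength (m : ℕ) (r : ℝ) : ℝ := ∫ t in (0:ℝ)..r, (1 - t ^ m) ^ (-(1/2) : ℝ)

variable {m : ℕ}

theorem arcLength_zero : arcLength m 0 = 0 := intervalIntegral.integral_same

theorem intervalIntegrable_arcLength_integrand (hm : m ≠ 0) :
    IntervalIntegrable (fun t : ℝ => (1 - t ^ m) ^ (-(1/2) : ℝ)) volume 0 1 := by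
  have hcmp : IntervalIntegrable (fun t : ℝ => (1 - t) ^ (-(1/2) : ℝ)) volume 0 1 := by
    simpa using ((intervalIntegral.intervalIntegrable_rpow' (a := 0) (b := 1)
      (r := -(1/2)) (by norm_num)).comp_sub_left 1).symm
  refine hcmp.mono_fun (by fun_prop : Measurable _).aestronglyMeasurable ?_
  rw [uIoc_of_le zero_le_one]
  filter_upwards [ae_restrict_mem measurableSet_Ioc] with t ⟨ht0, ht1⟩
  rcases ht1.lt_or_eq with ht1 | rfl
  · have hpow : 1 - t ≤ 1 - t ^ m := by linarith [pow_le_of_le_one ht0.le ht1.le hm]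
    rw [Real.norm_of_nonneg (Real.rpow_nonneg (by linarith) _),
      Real.norm_of_nonneg (Real.rpow_nonneg (by linarith) _)]
    exact Real.rpow_le_rpow_of_nonpos (by linarith) hpow (by norm_num)
  · simp -- both sides are the junk value `0 ^ (-1/2) = 0`

theorem arcLength_integrand_pos (hm : m ≠ 0) {t : ℝ} (h0 : 0 ≤ t) (h1 : t < 1) :
    0 < (1 - t ^ m) ^ (-(1/2) : ℝ) :=
  Real.rpow_pos_of_pos (sub_pos.2 (pow_lt_one₀ h0 h1 hm)) _

theorem hasDerivAt_arcLength (hm : m ≠ 0) {r : ℝ} (h0 : 0 ≤ r) (h1 : r < 1) :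
    HasDerivAt (arcLength m) ((1 - r ^ m) ^ (-(1/2) : ℝ)) r :=
  intervalIntegral.integral_hasDerivAt_right
    ((intervalIntegrable_arcLength_integrand hm).mono_set
      (by rw [uIcc_of_le zero_le_one, uIcc_of_le h0]; exact Icc_subset_Icc_right h1.le))
    (by fun_prop : Measurable _).aestronglyMeasurable.stronglyMeasurableAtFilter
    ((continuousAt_const.sub (continuousAt_pow r m)).rpow_const
      (Or.inl (sub_pos.2 (pow_lt_one₀ h0 h1 hm)).ne'))

theorem strictMonoOn_arcLength (hm : m ≠ 0) : StrictMonoOn (arcLength m) (Icc 0 1) := by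
  refine strictMonoOn_of_deriv_pos (convex_Icc 0 1) ?_ fun r hr => ?_
  · have := intervalIntegral.continuousOn_primitive_interval'
      (intervalIntegrable_arcLength_integrand hm) left_mem_uIcc
    rwa [uIcc_of_le zero_le_one] at this
  · rw [interior_Icc] at hr
    rw [(hasDerivAt_arcLength hm hr.1.le hr.2).deriv]
    exact arcLength_integrand_pos hm hr.1.le hr.2

variable {φ : ℝ → ℝ}

theorem hasDerivAt_of_rightInvOn_arcLength (hm : m ≠ 0)
    (hmaps : MapsTo φ (Icc 0 (arcLength m 1)) (Icc 0 1))
    (hinv : RightInvOn φ (arcLength m) (Icc 0 (arcLength m 1)))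
    {x : ℝ} (hx : x ∈ Ioo 0 (arcLength m 1)) :
    HasDerivAt φ √(1 - φ x ^ m) x := by
  have hF := strictMonoOn_arcLength hm
  rw [← arcLength_zero (m := m)] at hx
  have hmaps' : MapsTo φ (Icc (arcLength m 0) (arcLength m 1)) (Icc 0 1) := by
    rwa [arcLength_zero]
  have hinv' : RightInvOn φ (arcLength m) (Icc (arcLength m 0) (arcLength m 1)) := by
    rwa [arcLength_zero]
  obtain ⟨h0, h1⟩ := hF.mapsTo_Ioo_of_rightInvOn hmaps' hinv' hx
  convert hF.hasDerivAt_of_rightInvOn hmaps' hinv' hx (hasDerivAt_arcLength hm h0.le h1)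
    (arcLength_integrand_pos hm h0.le h1).ne' using 1
  rw [Real.rpow_neg (sub_pos.2 (pow_lt_one₀ h0.le h1 hm)).le, inv_inv, Real.sqrt_eq_rpow]

theorem apply_arcLength_one_of_rightInvOn (hm : m ≠ 0)
    (hmaps : MapsTo φ (Icc 0 (arcLength m 1)) (Icc 0 1))
    (hinv : RightInvOn φ (arcLength m) (Icc 0 (arcLength m 1))) :
    φ (arcLength m 1) = 1 := by
  refine (strictMonoOn_arcLength hm).leftInvOn_of_rightInvOn ?_ ?_ (right_mem_Icc.2 zero_le_one)
  · rwa [arcLength_zero]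
  · rwa [arcLength_zero]

theorem hasDerivWithinAt_Iic_arcLength_one (hm : m ≠ 0)
    (hmaps : MapsTo φ (Icc 0 (arcLength m 1)) (Icc 0 1))
    (hinv : RightInvOn φ (arcLength m) (Icc 0 (arcLength m 1))) :
    HasDerivWithinAt φ 0 (Iic (arcLength m 1)) (arcLength m 1) := by
  have hF := strictMonoOn_arcLength hm
  have hmaps' : MapsTo φ (Icc (arcLength m 0) (arcLength m 1)) (Icc 0 1) := by
    rwa [arcLength_zero]
  have hinv' : RightInvOn φ (arcLength m) (Icc (arcLength m 0) (arcLength m 1)) := by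
    rwa [arcLength_zero]
  have hL : 0 < arcLength m 1 := arcLength_zero (m := m) ▸
    hF (left_mem_Icc.2 zero_le_one) (right_mem_Icc.2 zero_le_one) zero_lt_one
  have hφL := apply_arcLength_one_of_rightInvOn hm hmaps hinv
  have hcont := hF.continuousWithinAt_Iic_of_rightInvOn hmaps' hinv' zero_lt_one
  have hderiv (x : ℝ) (hx : x ∈ Ioo 0 (arcLength m 1)) :=
    hasDerivAt_of_rightInvOn_arcLength hm hmaps hinv hx
  refine hasDerivWithinAt_Iic_of_tendsto_deriv
    (fun x hx => (hderiv x hx).differentiableAt.differentiableWithinAt)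
    (hcont.mono fun _ hx => hx.2.le) (Ioo_mem_nhdsLT hL) ?_
  have hlim : Tendsto φ (𝓝[<] arcLength m 1) (𝓝 (φ (arcLength m 1))) :=
    hcont.tendsto.mono_left (nhdsWithin_mono _ Iio_subset_Iic_self)
  rw [hφL] at hlim
  have hsqrt := ((hlim.pow m).const_sub 1).sqrt
  rw [one_pow, sub_self, Real.sqrt_zero] at hsqrt
  refine hsqrt.congr' ?_
  filter_upwards [Ioo_mem_nhdsLT hL] with x hx using (hderiv x hx).deriv.symm

end Clover

open Clover

/-- **Clover Pythagorean identity.**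
Let `m ≥ 1`, `ϖ = 2 ∫_0^1 (1 - t^m)^(-1/2) dt`, and let `φ` be the `m`-clover function:
on `[0, ϖ/2]` it is the inverse of the arc length integral `r ↦ ∫_0^r (1 - t^m)^(-1/2) dt`
with values in `[0, 1]`, extended to `[0, ϖ]` by `φ(ϖ - x) = φ(x)`.  Then `φ` is
differentiable on `(0, ϖ)` and `φ(x)^m + φ'(x)^2 = 1` there. -/
theorem clover_pythagorean (m : ℕ) (hm : 1 ≤ m)
    (ϖ : ℝ) (hϖ : ϖ = 2 * ∫ t in (0:ℝ)..1, (1 - t ^ m) ^ (-(1/2) : ℝ))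
    (φ : ℝ → ℝ)
    (hφ : ∀ x ∈ Set.Icc 0 (ϖ / 2),
      x = ∫ t in (0:ℝ)..(φ x), (1 - t ^ m) ^ (-(1/2) : ℝ))
    (hφ01 : ∀ x ∈ Set.Icc 0 (ϖ / 2), φ x ∈ Set.Icc (0:ℝ) 1)
    (hφsymm : ∀ x ∈ Set.Icc 0 ϖ, φ (ϖ - x) = φ x) :
    ∀ x ∈ Set.Ioo 0 ϖ,
      DifferentiableAt ℝ φ x ∧ φ x ^ m + (deriv φ x) ^ 2 = 1 := by
  intro x hx
  have hm0 : m ≠ 0 := Nat.one_le_iff_ne_zero.mp hm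
  have hL : ϖ / 2 = arcLength m 1 := by rw [hϖ, arcLength]; ring
  rw [hL] at hφ hφ01
  have hinv : RightInvOn φ (arcLength m) (Icc 0 (arcLength m 1)) := fun y hy => (hφ y hy).symm
  have hsymm : ∀ᶠ y in 𝓝 x, φ (ϖ - y) = φ y :=
    eventually_of_mem (Ioo_mem_nhds hx.1 hx.2) fun y hy => hφsymm y (Ioo_subset_Icc_self hy)
  have hpyth (y : ℝ) (hy : y ∈ Icc 0 (arcLength m 1)) : φ y ^ m + √(1 - φ y ^ m) ^ 2 = 1 := by
    rw [Real.sq_sqrt (sub_nonneg.2 (pow_le_one₀ (hφ01 y hy).1 (hφ01 y hy).2))]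
    ring
  rcases lt_trichotomy x (ϖ / 2) with hlt | rfl | hgt
  · have hD := hasDerivAt_of_rightInvOn_arcLength hm0 hφ01 hinv ⟨hx.1, hL ▸ hlt⟩
    exact ⟨hD.differentiableAt, hD.deriv ▸ hpyth x ⟨hx.1.le, (hL ▸ hlt).le⟩⟩
  · have hleft : HasDerivWithinAt φ 0 (Iic (ϖ / 2)) (ϖ / 2) := by
      rw [hL]
      exact hasDerivWithinAt_Iic_arcLength_one hm0 hφ01 hinv
    have hD := hasDerivAt_zero_of_reflection hleft hsymm
    refine ⟨hD.differentiableAt, ?_⟩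
    rw [hD.deriv, hL, apply_arcLength_one_of_rightInvOn hm0 hφ01 hinv]
    simp
  · have hrefl : ϖ - x ∈ Ioo 0 (arcLength m 1) := ⟨by linarith [hx.2], by linarith⟩
    have hD := (hasDerivAt_of_rightInvOn_arcLength hm0 hφ01 hinv hrefl).of_reflection hsymm
    refine ⟨hD.differentiableAt, ?_⟩
    rw [hD.deriv, neg_sq, ← hφsymm x ⟨hx.1.le, hx.2.le⟩]
    exact hpyth _ ⟨hrefl.1.le, hrefl.2.le⟩
end

section
/- Let m ≥ 1 be a natural number, ϖ_m = 2∫_0^1 (1-t^m)^(-1/2) dt, and let φ : ℝ → ℝ satisfy: x = ∫_0^{φ(x)} (1-t^m)^(-1/2) dt and 0 ≤ φ(x) ≤ 1 for all x ∈ [0, ϖ_m/2], and φ(ϖ_m - x) = φ(x) for all x ∈ [0, ϖ_m]. Then for every x in the open interval (0, ϖ_m), φ is twice differentiable at x and φ(x)^(m-1) = -(2/m)·φ''(x). -/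
/-!
On `[0, ϖ/2]` the clover function is a right inverse of the arc length `l_m`, whose integrand
`(1 - t^m)^(-1/2)` is `≥ 1`; so `φ` is 1-Lipschitz there, and the inverse function theorem gives
`φ' = √(1 - φ^m)` on `(0, ϖ/2)`, whence `φ'' = -(m/2) φ^(m-1)`. The reflection `φ(ϖ - x) = φ(x)`
carries both formulas to `(ϖ/2, ϖ)`, with `φ' = -√(1 - φ^m)`. At the midpoint `φ = 1`, so the
one-sided limits of `φ'` are both `0` and those of `φ''` both `-m/2`; a continuous function whose
derivative has a limit at a point is differentiable there with that derivative.
-/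

open Set Filter Topology MeasureTheory intervalIntegral

section Calculus

variable {E : Type*} [NormedAddCommGroup E] [NormedSpace ℝ E]

theorem hasDerivAt_of_tendsto_nhdsNE {f g : ℝ → E} {c : ℝ} {L : E}
    (hfg : ∀ᶠ y in 𝓝[≠] c, HasDerivAt f (g y) y) (hf : ContinuousAt f c)
    (hg : Tendsto g (𝓝[≠] c) (𝓝 L)) : HasDerivAt f L c := by
  have hdiff : DifferentiableOn ℝ f {y | HasDerivAt f (g y) y} :=
    fun y hy => hy.differentiableAt.differentiableWithinAt
  have hderiv : Tendsto (deriv f) (𝓝[≠] c) (𝓝 L) :=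
    hg.congr' (hfg.mono fun y hy => hy.deriv.symm)
  have hgt : 𝓝[>] c ≤ 𝓝[≠] c := nhdsWithin_mono c fun y hy => ne_of_gt hy
  have hlt : 𝓝[<] c ≤ 𝓝[≠] c := nhdsWithin_mono c fun y hy => ne_of_lt hy
  have hL := hasDerivWithinAt_Iic_of_tendsto_deriv hdiff hf.continuousWithinAt (hlt hfg)
    (hderiv.mono_left hlt)
  have hR := hasDerivWithinAt_Ici_of_tendsto_deriv hdiff hf.continuousWithinAt (hgt hfg)
    (hderiv.mono_left hgt)
  simpa only [Iic_union_Ici, hasDerivWithinAt_univ] using hL.union hR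

variable {f : ℝ → E} {c x : ℝ}

theorem hasDerivAt_neg_of_eventuallyEq_reflect {f' : E}
    (hf : f =ᶠ[𝓝 x] fun y => f (c - y)) (h : HasDerivAt f f' (c - x)) :
    HasDerivAt f (-f') x :=
  (h.comp_const_sub c x).congr_of_eventuallyEq hf

theorem deriv_eventuallyEq_of_eventuallyEq_reflect (hf : f =ᶠ[𝓝 x] fun y => f (c - y)) :
    deriv f =ᶠ[𝓝 x] fun y => -deriv f (c - y) :=
  hf.deriv.trans (.of_eq (funext fun y => deriv_comp_const_sub f c y))

theorem hasDerivAt_deriv_of_eventuallyEq_reflect {f'' : E}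
    (hf : f =ᶠ[𝓝 x] fun y => f (c - y)) (h : HasDerivAt (deriv f) f'' (c - x)) :
    HasDerivAt (deriv f) f'' x := by
  simpa only [neg_neg] using
    (h.comp_const_sub c x).neg.congr_of_eventuallyEq
      (deriv_eventuallyEq_of_eventuallyEq_reflect hf)

end Calculus

theorem hasDerivAt_deriv_of_hasDerivAt_sqrt {m : ℕ} {f : ℝ → ℝ} {x : ℝ}
    (hf : ∀ᶠ y in 𝓝 x, HasDerivAt f (√(1 - f y ^ m)) y) (hx : f x ^ m < 1) :
    HasDerivAt (deriv f) (-(m / 2 * f x ^ (m - 1))) x := by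
  have hpos : 0 < √(1 - f x ^ m) := Real.sqrt_pos.2 (sub_pos.2 hx)
  have h := ((hf.self_of_nhds.fun_pow m).const_sub 1).sqrt (sub_pos.2 hx).ne'
  refine (h.congr_of_eventuallyEq (hf.mono fun y hy => hy.deriv)).congr_deriv ?_
  field_simp

noncomputable def cloverArc (m : ℕ) (r : ℝ) : ℝ :=
  ∫ t in (0:ℝ)..r, (1 - t ^ m) ^ (-(1/2) : ℝ)

section cloverArc

variable {m : ℕ}

@[simp]
theorem cloverArc_zero : cloverArc m 0 = 0 := integral_same

theorem continuousAt_clover_integrand (hm : m ≠ 0) {t : ℝ} (ht0 : 0 ≤ t) (ht1 : t < 1) :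
    ContinuousAt (fun t : ℝ => (1 - t ^ m) ^ (-(1/2) : ℝ)) t :=
  (continuousAt_const.sub (continuousAt_pow t m)).rpow_const
    (.inl (sub_pos.2 (pow_lt_one₀ ht0 ht1 hm)).ne')

theorem intervalIntegrable_clover_integrand (hm : m ≠ 0) {a b : ℝ} (ha : a ∈ Icc 0 1)
    (hb : b ∈ Icc 0 1) :
    IntervalIntegrable (fun t : ℝ => (1 - t ^ m) ^ (-(1/2) : ℝ)) volume a b := by
  suffices IntervalIntegrable (fun t : ℝ => (1 - t ^ m) ^ (-(1/2) : ℝ)) volume 0 1 by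
    rw [← uIcc_of_le zero_le_one] at ha hb
    exact this.mono_set (uIcc_subset_uIcc ha hb)
  have hdom : IntervalIntegrable (fun t : ℝ => (1 - t) ^ (-(1/2) : ℝ)) volume 0 1 := by
    simpa using
      ((intervalIntegrable_rpow' (r := -(1/2)) (by norm_num) (a := 0) (b := 1)).comp_sub_left
        1).symm
  rw [intervalIntegrable_iff_integrableOn_Ioo_of_le zero_le_one] at hdom ⊢
  refine hdom.mono' ((ContinuousOn.aestronglyMeasurable (fun t ht =>
    (continuousAt_clover_integrand hm ht.1.le ht.2).continuousWithinAt) measurableSet_Ioo))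
    ((ae_restrict_mem measurableSet_Ioo).mono fun t ht => ?_)
  have hpos : 0 < 1 - t ^ m := sub_pos.2 (pow_lt_one₀ ht.1.le ht.2 hm)
  rw [Real.norm_of_nonneg (Real.rpow_nonneg hpos.le _)]
  exact Real.rpow_le_rpow_of_nonpos (sub_pos.2 ht.2)
    (sub_le_sub_left (pow_le_of_le_one ht.1.le ht.2.le hm) 1) (by norm_num)

theorem one_le_clover_integrand (hm : m ≠ 0) {t : ℝ} (ht0 : 0 ≤ t) (ht1 : t < 1) :
    1 ≤ (1 - t ^ m) ^ (-(1/2) : ℝ) :=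
  Real.one_le_rpow_of_pos_of_le_one_of_nonpos (sub_pos.2 (pow_lt_one₀ ht0 ht1 hm))
    (sub_le_self _ (pow_nonneg ht0 m)) (by norm_num)

theorem sub_le_cloverArc_sub (hm : m ≠ 0) {a b : ℝ} (ha : 0 ≤ a) (hab : a ≤ b)
    (hb : b ≤ 1) :
    b - a ≤ cloverArc m b - cloverArc m a := by
  have h0 : (0:ℝ) ∈ Icc 0 1 := ⟨le_rfl, zero_le_one⟩
  rw [cloverArc, cloverArc, integral_interval_sub_left
    (intervalIntegrable_clover_integrand hm h0 ⟨ha.trans hab, hb⟩)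
    (intervalIntegrable_clover_integrand hm h0 ⟨ha, hab.trans hb⟩)]
  calc b - a = ∫ _ in a..b, (1:ℝ) := by simp
    _ ≤ _ := integral_mono_on_of_le_Ioo hab intervalIntegrable_const
        (intervalIntegrable_clover_integrand hm ⟨ha, hab.trans hb⟩ ⟨ha.trans hab, hb⟩)
        fun t ht => one_le_clover_integrand hm (ha.trans ht.1.le) (ht.2.trans_le hb)

theorem hasDerivAt_cloverArc (hm : m ≠ 0) {t : ℝ} (ht : t ∈ Ioo 0 1) :
    HasDerivAt (cloverArc m) (√(1 - t ^ m))⁻¹ t := by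
  have hcont : ContinuousOn (fun t : ℝ => (1 - t ^ m) ^ (-(1/2) : ℝ)) (Ioo 0 1) :=
    fun s hs => (continuousAt_clover_integrand hm hs.1.le hs.2).continuousWithinAt
  rw [Real.sqrt_eq_rpow, ← Real.rpow_neg (sub_nonneg.2 (pow_le_one₀ ht.1.le ht.2.le))]
  exact integral_hasDerivAt_right
    (intervalIntegrable_clover_integrand hm ⟨le_rfl, zero_le_one⟩ ⟨ht.1.le, ht.2.le⟩)
    (hcont.stronglyMeasurableAtFilter isOpen_Ioo t ht)
    (continuousAt_clover_integrand hm ht.1.le ht.2)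

theorem lipschitzOnWith_of_cloverArc_comp_eq (hm : m ≠ 0) {φ : ℝ → ℝ} {s : Set ℝ}
    (hφ : ∀ x ∈ s, cloverArc m (φ x) = x) (hφ01 : MapsTo φ s (Icc 0 1)) :
    LipschitzOnWith 1 φ s := by
  refine LipschitzOnWith.of_le_add fun x hx y hy => ?_
  rcases le_total (φ x) (φ y) with hxy | hyx
  · linarith [dist_nonneg (x := x) (y := y)]
  · have := sub_le_cloverArc_sub hm (hφ01 hy).1 hyx (hφ01 hx).2
    rw [hφ x hx, hφ y hy] at this
    linarith [Real.dist_eq x y ▸ le_abs_self (x - y)]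

end cloverArc

structure IsCloverFunction (m : ℕ) (ϖ : ℝ) (φ : ℝ → ℝ) : Prop where
  half_eq : ϖ / 2 = cloverArc m 1
  arc_comp : ∀ x ∈ Icc 0 (ϖ / 2), cloverArc m (φ x) = x
  mapsTo : MapsTo φ (Icc 0 (ϖ / 2)) (Icc 0 1)
  symm : ∀ x ∈ Icc 0 ϖ, φ (ϖ - x) = φ x

namespace IsCloverFunction

variable {m : ℕ} {ϖ : ℝ} {φ : ℝ → ℝ} {x : ℝ}

theorem one_le_half (h : IsCloverFunction m ϖ φ) (hm : m ≠ 0) : 1 ≤ ϖ / 2 := by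
  simpa [h.half_eq] using sub_le_cloverArc_sub hm le_rfl zero_le_one le_rfl

theorem apply_half (h : IsCloverFunction m ϖ φ) (hm : m ≠ 0) : φ (ϖ / 2) = 1 := by
  have hc : ϖ / 2 ∈ Icc 0 (ϖ / 2) := ⟨by linarith [h.one_le_half hm], le_rfl⟩
  have := sub_le_cloverArc_sub hm (h.mapsTo hc).1 (h.mapsTo hc).2 le_rfl
  rw [h.arc_comp _ hc, ← h.half_eq, sub_self] at this
  linarith [(h.mapsTo hc).2]

theorem mem_Ioo (h : IsCloverFunction m ϖ φ) (hx : x ∈ Ioo 0 (ϖ / 2)) : φ x ∈ Ioo 0 1 := by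
  have hx' := Ioo_subset_Icc_self hx
  have harc := h.arc_comp x hx'
  obtain ⟨h0, h1⟩ := h.mapsTo hx'
  refine ⟨h0.lt_of_ne ?_, h1.lt_of_ne ?_⟩ <;> rintro hφx
  · rw [← hφx, cloverArc_zero] at harc
    exact hx.1.ne harc
  · rw [hφx, ← h.half_eq] at harc
    exact hx.2.ne' harc

theorem continuousOn (h : IsCloverFunction m ϖ φ) (hm : m ≠ 0) :
    ContinuousOn φ (Icc 0 ϖ) := by
  have hc := h.one_le_half hm
  have hleft : ContinuousOn φ (Icc 0 (ϖ / 2)) :=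
    (lipschitzOnWith_of_cloverArc_comp_eq hm h.arc_comp h.mapsTo).continuousOn
  have hright : ContinuousOn φ (Icc (ϖ / 2) ϖ) :=
    (hleft.comp (continuous_sub_left ϖ).continuousOn fun y hy =>
      ⟨by linarith [hy.2], by linarith [hy.1]⟩).congr fun y hy =>
      (h.symm y ⟨by linarith [hy.1], hy.2⟩).symm
  rw [← Icc_union_Icc_eq_Icc (b := ϖ / 2) (by linarith) (by linarith)]
  exact hleft.union_of_isClosed hright isClosed_Icc isClosed_Icc

theorem continuousAt (h : IsCloverFunction m ϖ φ) (hm : m ≠ 0) (hx : x ∈ Ioo 0 ϖ) :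
    ContinuousAt φ x :=
  (h.continuousOn hm).continuousAt (Icc_mem_nhds hx.1 hx.2)

theorem half_mem_Ioo (h : IsCloverFunction m ϖ φ) (hm : m ≠ 0) : ϖ / 2 ∈ Ioo 0 ϖ := by
  constructor <;> linarith [h.one_le_half hm]

theorem eventuallyEq_reflect (h : IsCloverFunction m ϖ φ) (hx : x ∈ Ioo 0 ϖ) :
    φ =ᶠ[𝓝 x] fun y => φ (ϖ - y) :=
  eventually_of_mem (Icc_mem_nhds hx.1 hx.2) fun y hy => (h.symm y hy).symm

theorem hasDerivAt_of_lt (h : IsCloverFunction m ϖ φ) (hm : m ≠ 0) (hx : x ∈ Ioo 0 (ϖ / 2)) :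
    HasDerivAt φ (√(1 - φ x ^ m)) x := by
  have hφx := h.mem_Ioo hx
  simpa using (hasDerivAt_cloverArc hm hφx).of_local_left_inverse
    (h.continuousAt hm ⟨hx.1, by linarith [hx.1, hx.2]⟩)
    (inv_ne_zero (Real.sqrt_pos.2 (sub_pos.2 (pow_lt_one₀ hφx.1.le hφx.2 hm))).ne')
    (eventually_of_mem (Icc_mem_nhds hx.1 hx.2) h.arc_comp)

theorem hasDerivAt_deriv_of_lt (h : IsCloverFunction m ϖ φ) (hm : m ≠ 0)
    (hx : x ∈ Ioo 0 (ϖ / 2)) : HasDerivAt (deriv φ) (-(m / 2 * φ x ^ (m - 1))) x :=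
  hasDerivAt_deriv_of_hasDerivAt_sqrt
    (eventually_of_mem (isOpen_Ioo.mem_nhds hx) fun _ hy => h.hasDerivAt_of_lt hm hy)
    (pow_lt_one₀ (h.mem_Ioo hx).1.le (h.mem_Ioo hx).2 hm)

theorem hasDerivAt_of_gt (h : IsCloverFunction m ϖ φ) (hm : m ≠ 0)
    (hx : x ∈ Ioo (ϖ / 2) ϖ) :
    HasDerivAt φ (-√(1 - φ x ^ m)) x := by
  have hx' : x ∈ Ioo 0 ϖ := ⟨by linarith [hx.1, h.one_le_half hm], hx.2⟩
  rw [← h.symm x (Ioo_subset_Icc_self hx')]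
  exact hasDerivAt_neg_of_eventuallyEq_reflect (h.eventuallyEq_reflect hx')
    (h.hasDerivAt_of_lt hm ⟨by linarith [hx.2], by linarith [hx.1]⟩)

theorem hasDerivAt_deriv_of_gt (h : IsCloverFunction m ϖ φ) (hm : m ≠ 0)
    (hx : x ∈ Ioo (ϖ / 2) ϖ) : HasDerivAt (deriv φ) (-(m / 2 * φ x ^ (m - 1))) x := by
  have hx' : x ∈ Ioo 0 ϖ := ⟨by linarith [hx.1, h.one_le_half hm], hx.2⟩
  rw [← h.symm x (Ioo_subset_Icc_self hx')]
  exact hasDerivAt_deriv_of_eventuallyEq_reflect (h.eventuallyEq_reflect hx')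
    (h.hasDerivAt_deriv_of_lt hm ⟨by linarith [hx.2], by linarith [hx.1]⟩)

theorem differentiableAt_abs_deriv_of_ne (h : IsCloverFunction m ϖ φ) (hm : m ≠ 0)
    (hx : x ∈ Ioo 0 ϖ) (hne : x ≠ ϖ / 2) :
    DifferentiableAt ℝ φ x ∧ |deriv φ x| = √(1 - φ x ^ m) := by
  rcases hne.lt_or_gt with hlt | hgt
  · have hd := h.hasDerivAt_of_lt hm ⟨hx.1, hlt⟩
    exact ⟨hd.differentiableAt, by rw [hd.deriv, abs_of_nonneg (Real.sqrt_nonneg _)]⟩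
  · have hd := h.hasDerivAt_of_gt hm ⟨hgt, hx.2⟩
    exact ⟨hd.differentiableAt, by rw [hd.deriv, abs_neg, abs_of_nonneg (Real.sqrt_nonneg _)]⟩

theorem hasDerivAt_deriv_of_ne (h : IsCloverFunction m ϖ φ) (hm : m ≠ 0)
    (hx : x ∈ Ioo 0 ϖ) (hne : x ≠ ϖ / 2) :
    HasDerivAt (deriv φ) (-(m / 2 * φ x ^ (m - 1))) x := by
  rcases hne.lt_or_gt with hlt | hgt
  · exact h.hasDerivAt_deriv_of_lt hm ⟨hx.1, hlt⟩
  · exact h.hasDerivAt_deriv_of_gt hm ⟨hgt, hx.2⟩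

theorem eventually_nhdsNE_half (h : IsCloverFunction m ϖ φ) (hm : m ≠ 0) :
    ∀ᶠ y in 𝓝[≠] (ϖ / 2), y ∈ Ioo 0 ϖ ∧ y ≠ ϖ / 2 :=
  (eventually_nhdsWithin_of_eventually_nhds (isOpen_Ioo.mem_nhds (h.half_mem_Ioo hm))).and
    self_mem_nhdsWithin

theorem tendsto_deriv_half (h : IsCloverFunction m ϖ φ) (hm : m ≠ 0) :
    Tendsto (deriv φ) (𝓝[≠] (ϖ / 2)) (𝓝 0) := by
  have hφ := h.continuousAt hm (h.half_mem_Ioo hm)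
  have hsqrt : Tendsto (fun y => √(1 - φ y ^ m)) (𝓝 (ϖ / 2)) (𝓝 0) := by
    have : ContinuousAt (fun y => √(1 - φ y ^ m)) (ϖ / 2) := by fun_prop
    rwa [ContinuousAt, h.apply_half hm, one_pow, sub_self, Real.sqrt_zero] at this
  rw [tendsto_zero_iff_abs_tendsto_zero]
  exact (hsqrt.mono_left nhdsWithin_le_nhds).congr' <| (h.eventually_nhdsNE_half hm).mono
    fun y hy => (h.differentiableAt_abs_deriv_of_ne hm hy.1 hy.2).2.symm

theorem hasDerivAt_half (h : IsCloverFunction m ϖ φ) (hm : m ≠ 0) : HasDerivAt φ 0 (ϖ / 2) :=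
  hasDerivAt_of_tendsto_nhdsNE ((h.eventually_nhdsNE_half hm).mono fun _ hy =>
      (h.differentiableAt_abs_deriv_of_ne hm hy.1 hy.2).1.hasDerivAt)
    (h.continuousAt hm (h.half_mem_Ioo hm)) (h.tendsto_deriv_half hm)

theorem hasDerivAt_deriv_half (h : IsCloverFunction m ϖ φ) (hm : m ≠ 0) :
    HasDerivAt (deriv φ) (-(m / 2 * φ (ϖ / 2) ^ (m - 1))) (ϖ / 2) := by
  have hφ := h.continuousAt hm (h.half_mem_Ioo hm)
  have hφ'' : ContinuousAt (fun y => -(m / 2 * φ y ^ (m - 1))) (ϖ / 2) := by fun_prop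
  refine hasDerivAt_of_tendsto_nhdsNE
    ((h.eventually_nhdsNE_half hm).mono fun _ hy => h.hasDerivAt_deriv_of_ne hm hy.1 hy.2) ?_
    (hφ''.tendsto.mono_left nhdsWithin_le_nhds)
  rw [← continuousWithinAt_compl_self, ContinuousWithinAt, (h.hasDerivAt_half hm).deriv]
  exact h.tendsto_deriv_half hm

theorem hasDerivAt_deriv (h : IsCloverFunction m ϖ φ) (hm : m ≠ 0) (hx : x ∈ Ioo 0 ϖ) :
    HasDerivAt (deriv φ) (-(m / 2 * φ x ^ (m - 1))) x := by
  rcases eq_or_ne x (ϖ / 2) with rfl | hne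
  · exact h.hasDerivAt_deriv_half hm
  · exact h.hasDerivAt_deriv_of_ne hm hx hne

theorem differentiableAt (h : IsCloverFunction m ϖ φ) (hm : m ≠ 0) (hx : x ∈ Ioo 0 ϖ) :
    DifferentiableAt ℝ φ x := by
  rcases eq_or_ne x (ϖ / 2) with rfl | hne
  · exact (h.hasDerivAt_half hm).differentiableAt
  · exact (h.differentiableAt_abs_deriv_of_ne hm hx hne).1

end IsCloverFunction

/-- **Second-order differential identity for the clover function.**
Let `m ≥ 1`, `ϖ = 2 ∫_0^1 (1 - t^m)^(-1/2) dt`, and let `φ` be the `m`-clover function: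
on `[0, ϖ/2]` it is the inverse of the arc length integral with values in `[0, 1]`,
extended to `[0, ϖ]` by `φ(ϖ - x) = φ(x)`.  Then `φ` is twice differentiable on `(0, ϖ)`
and `φ(x)^(m-1) = -(2/m) φ''(x)` there. -/
theorem clover_second_derivative (m : ℕ) (hm : 1 ≤ m)
    (ϖ : ℝ) (hϖ : ϖ = 2 * ∫ t in (0:ℝ)..1, (1 - t ^ m) ^ (-(1/2) : ℝ))
    (φ : ℝ → ℝ)
    (hφ : ∀ x ∈ Set.Icc 0 (ϖ / 2),
      x = ∫ t in (0:ℝ)..(φ x), (1 - t ^ m) ^ (-(1/2) : ℝ))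
    (hφ01 : ∀ x ∈ Set.Icc 0 (ϖ / 2), φ x ∈ Set.Icc (0:ℝ) 1)
    (hφsymm : ∀ x ∈ Set.Icc 0 ϖ, φ (ϖ - x) = φ x) :
    ∀ x ∈ Set.Ioo 0 ϖ,
      DifferentiableAt ℝ φ x ∧ DifferentiableAt ℝ (deriv φ) x ∧
        φ x ^ (m - 1) = -(2 / m) * deriv (deriv φ) x := by
  have h : IsCloverFunction m ϖ φ :=
    { half_eq := by rw [hϖ, cloverArc]; ring
      arc_comp := fun x hx => (hφ x hx).symm
      mapsTo := hφ01
      symm := hφsymm }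
  have hm0 : m ≠ 0 := Nat.one_le_iff_ne_zero.mp hm
  intro x hx
  have hφ'' := h.hasDerivAt_deriv hm0 hx
  refine ⟨h.differentiableAt hm0 hx, hφ''.differentiableAt, ?_⟩
  rw [hφ''.deriv]
  field_simp
end

section
/- Let m ≥ 1 be a natural number, ϖ_m = 2∫_0^1 (1-t^m)^(-1/2) dt, and let φ : ℝ → ℝ satisfy: x = ∫_0^{φ(x)} (1-t^m)^(-1/2) dt and 0 ≤ φ(x) ≤ 1 for all x ∈ [0, ϖ_m/2], and φ(ϖ_m - x) = φ(x) for all x ∈ [0, ϖ_m]. Define I(n) = ∫_0^{ϖ_m} φ(x)^n dx for integers n ≥ 0. Then lim_{n→∞} I(n)/I(n+1) = 1. -/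
/-!
On `[0, ϖ/2]` the clover function inverts the strictly increasing arc length, so it is
increasing, takes values in `[0, 1]` and exceeds every `b < 1` on a set of positive length; by
the symmetry `φ (ϖ - x) = φ x` the ratio `I n / I (n + 1)` is the same ratio of integrals over
`[0, ϖ/2]`. For any `0 ≤ f ≤ 1` on a finite measure space and `0 < a`, the pointwise bound
`a f ^ n ≤ a ^ (n + 1) + f ^ (n + 1)` gives `a ∫ f ^ n ≤ a ^ (n + 1) μ univ + ∫ f ^ (n + 1)`,
while Markov's inequality gives `∫ f ^ (n + 1) ≥ b ^ (n + 1) μ {b ≤ f}`. For `a < b < 1` these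
combine to `1 ≤ ∫ f ^ n / ∫ f ^ (n + 1) ≤ 1 / a + O((a / b) ^ n)`.
-/

open Filter Topology Set MeasureTheory

theorem tendsto_div_succ_of_geometric_bounds {J : ℕ → ℝ} (hanti : ∀ n, J (n + 1) ≤ J n)
    (hupper : ∀ a ∈ Ioo (0 : ℝ) 1, ∃ C, ∀ n, a * J n ≤ C * a ^ n + J (n + 1))
    (hlower : ∀ b ∈ Ioo (0 : ℝ) 1, ∃ c > 0, ∀ n, c * b ^ n ≤ J n) :
    Tendsto (fun n => J n / J (n + 1)) atTop (𝓝 1) := by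
  have hpos : ∀ n, 0 < J n := by
    obtain ⟨c, hc, hcJ⟩ := hlower (1 / 2) (by norm_num)
    exact fun n => (mul_pos hc (by positivity)).trans_le (hcJ n)
  refine tendsto_order.2 ⟨fun l hl => Eventually.of_forall fun n => ?_, fun u hu => ?_⟩
  · exact hl.trans_le ((one_le_div (hpos _)).2 (hanti n))
  obtain ⟨a, ha, hau⟩ : ∃ a ∈ Ioo (0 : ℝ) 1, 1 / a < u :=
    ⟨2 / (1 + u), ⟨by positivity, by rw [div_lt_one (by linarith)]; linarith⟩,
      by rw [one_div_div]; linarith⟩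
  obtain ⟨b, hab, hb1⟩ := exists_between ha.2
  have hb0 : 0 < b := ha.1.trans hab
  obtain ⟨C, hC⟩ := hupper a ha
  obtain ⟨c, hc, hcJ⟩ := hlower b ⟨hb0, hb1⟩
  set K := max C 0 / (c * b) with hK
  have hbound : ∀ n, J n / J (n + 1) ≤ (1 + K * (a / b) ^ n) / a := by
    intro n
    have hCa : max C 0 * a ^ n ≤ K * (a / b) ^ n * J (n + 1) := by
      calc max C 0 * a ^ n = K * (a / b) ^ n * (c * b ^ (n + 1)) := by
            rw [hK, div_pow, pow_succ]; field_simp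
        _ ≤ K * (a / b) ^ n * J (n + 1) :=
            mul_le_mul_of_nonneg_left (hcJ _) (by rw [hK]; have := ha.1; positivity)
    rw [div_le_iff₀ (hpos _), div_mul_eq_mul_div, le_div_iff₀ ha.1]
    nlinarith [hC n, le_max_left C 0, pow_nonneg ha.1.le n]
  have hlim : Tendsto (fun n => (1 + K * (a / b) ^ n) / a) atTop (𝓝 ((1 + K * 0) / a)) :=
    ((tendsto_pow_atTop_nhds_zero_of_lt_one (div_nonneg ha.1.le hb0.le)
      ((div_lt_one hb0).2 hab)).const_mul K |>.const_add 1).div_const a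
  rw [mul_zero, add_zero] at hlim
  exact (hlim.eventually_lt_const hau).mono fun n hn => (hbound n).trans_lt hn

theorem mul_pow_le_pow_succ_add_pow_succ {a x : ℝ} (ha : 0 ≤ a) (hx : 0 ≤ x) (n : ℕ) :
    a * x ^ n ≤ a ^ (n + 1) + x ^ (n + 1) := by
  rcases le_total x a with hxa | hax
  · have : a * x ^ n ≤ a * a ^ n := by gcongr
    rw [pow_succ' a]; linarith [pow_nonneg hx (n + 1)]
  · have : a * x ^ n ≤ x * x ^ n := by gcongr
    rw [pow_succ' x]; linarith [pow_nonneg ha (n + 1)]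

theorem tendsto_integral_pow_div_integral_pow_succ {α : Type*} [MeasurableSpace α]
    {μ : Measure α} [IsFiniteMeasure μ] {f : α → ℝ}
    (hint : ∀ n, Integrable (fun x => f x ^ n) μ) (hf : ∀ᵐ x ∂μ, f x ∈ Icc 0 1)
    (hlarge : ∀ b ∈ Ioo (0 : ℝ) 1, μ {x | b ≤ f x} ≠ 0) :
    Tendsto (fun n => (∫ x, f x ^ n ∂μ) / ∫ x, f x ^ (n + 1) ∂μ) atTop (𝓝 1) := by
  refine tendsto_div_succ_of_geometric_bounds (fun n => ?_) (fun a ha => ?_) (fun b hb => ?_)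
  · exact integral_mono_ae (hint _) (hint _)
      (hf.mono fun x hx => pow_le_pow_of_le_one hx.1 hx.2 n.le_succ)
  · refine ⟨a * μ.real univ, fun n => ?_⟩
    calc a * ∫ x, f x ^ n ∂μ = ∫ x, a * f x ^ n ∂μ := (integral_const_mul _ _).symm
      _ ≤ ∫ x, a ^ (n + 1) + f x ^ (n + 1) ∂μ :=
        integral_mono_ae ((hint n).const_mul a) ((integrable_const _).add (hint _))
          (hf.mono fun x hx => mul_pow_le_pow_succ_add_pow_succ ha.1.le hx.1 n)
      _ = a * μ.real univ * a ^ n + ∫ x, f x ^ (n + 1) ∂μ := by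
        rw [integral_add (integrable_const _) (hint _), integral_const, smul_eq_mul, pow_succ']
        ring
  · refine ⟨μ.real {x | b ≤ f x},
      ((measureReal_ne_zero_iff).2 (hlarge b hb)).lt_of_le' measureReal_nonneg, fun n => ?_⟩
    calc μ.real {x | b ≤ f x} * b ^ n ≤ b ^ n * μ.real {x | b ^ n ≤ f x ^ n} := by
          rw [mul_comm]
          exact mul_le_mul_of_nonneg_left
            (measureReal_mono fun x (hx : b ≤ f x) => pow_le_pow_left₀ hb.1.le hx n)
            (pow_nonneg hb.1.le n)
      _ ≤ ∫ x, f x ^ n ∂μ :=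
        mul_meas_ge_le_integral_of_nonneg (hf.mono fun x hx => pow_nonneg hx.1 n) (hint n) _

theorem intervalIntegrable_one_sub_pow_rpow {m : ℕ} (hm : m ≠ 0) {s : ℝ} (hs : -1 < s)
    (hs0 : s ≤ 0) : IntervalIntegrable (fun t : ℝ => (1 - t ^ m) ^ s) volume 0 1 := by
  have hdom : IntervalIntegrable (fun t : ℝ => (1 - t) ^ s) volume 0 1 := by
    simpa using
      ((intervalIntegral.intervalIntegrable_rpow' hs (a := 0) (b := 1)).comp_sub_left 1).symm
  refine hdom.mono_fun'
    ((measurable_const.sub (measurable_id.pow_const m)).pow_const s).aestronglyMeasurable ?_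
  rw [uIoc_of_le zero_le_one, ← restrict_Ioo_eq_restrict_Ioc]
  refine ae_restrict_of_forall_mem measurableSet_Ioo fun t ht => ?_
  -- `1 - t ≤ 1 - t ^ m` on `(0, 1)` and `x ↦ x ^ s` is antitone.
  have htm : t ^ m ≤ t := pow_le_of_le_one ht.1.le ht.2.le hm
  show ‖(1 - t ^ m) ^ s‖ ≤ (1 - t) ^ s
  rw [Real.norm_of_nonneg (Real.rpow_nonneg (by linarith [pow_lt_one₀ ht.1.le ht.2 hm]) _)]
  exact Real.rpow_le_rpow_of_nonpos (by linarith [ht.2]) (by linarith) hs0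

theorem integral_eq_two_mul_integral_half {f : ℝ → ℝ} {c : ℝ}
    (hsymm : ∀ x ∈ uIcc 0 (c / 2), f (c - x) = f x)
    (hf : IntervalIntegrable f volume 0 (c / 2)) :
    ∫ x in 0..c, f x = 2 * ∫ x in 0..c / 2, f x := by
  have hreflect := intervalIntegral.integral_comp_sub_left f c (a := 0) (b := c / 2)
  rw [sub_zero, show c - c / 2 = c / 2 by ring, intervalIntegral.integral_congr hsymm]
    at hreflect
  have hf' : IntervalIntegrable f volume (c / 2) c := by
    have hreflected := hf.comp_sub_left c
    rw [sub_zero, show c - c / 2 = c / 2 by ring] at hreflected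
    refine hreflected.symm.congr fun x hx => ?_
    have hx' : c - x ∈ uIcc 0 (c / 2) := by
      rcases mem_uIcc.1 (uIoc_subset_uIcc hx) with h | h
      · exact mem_uIcc.2 (Or.inl ⟨by linarith, by linarith⟩)
      · exact mem_uIcc.2 (Or.inr ⟨by linarith, by linarith⟩)
    simpa using (hsymm _ hx').symm
  rw [← intervalIntegral.integral_add_adjacent_intervals hf hf', hreflect]
  ring

noncomputable def cloverArcLength (m : ℕ) (r : ℝ) : ℝ :=
  ∫ t in (0 : ℝ)..r, (1 - t ^ m) ^ (-(1 / 2) : ℝ)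

theorem strictMonoOn_cloverArcLength {m : ℕ} (hm : m ≠ 0) :
    StrictMonoOn (cloverArcLength m) (Icc 0 1) := by
  have hint : ∀ r ∈ Icc (0 : ℝ) 1,
      IntervalIntegrable (fun t : ℝ => (1 - t ^ m) ^ (-(1 / 2) : ℝ)) volume 0 r := fun r hr =>
    (intervalIntegrable_one_sub_pow_rpow hm (by norm_num) (by norm_num)).mono_set
      (uIcc_subset_uIcc_left (by rwa [uIcc_of_le zero_le_one]))
  intro u hu v hv huv
  rw [← sub_pos, cloverArcLength, cloverArcLength,
    intervalIntegral.integral_interval_sub_left (hint v hv) (hint u hu)]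
  refine intervalIntegral.intervalIntegral_pos_of_pos_on
    (((hint v hv).symm.trans (hint u hu)).symm) (fun t ht => ?_) huv
  have : t ^ m < 1 := pow_lt_one₀ (hu.1.trans ht.1.le) (ht.2.trans_le hv.2) hm
  exact Real.rpow_pos_of_pos (by linarith) _

theorem cloverArcLength_nonneg {m : ℕ} (hm : m ≠ 0) {b : ℝ} (hb : b ∈ Icc (0 : ℝ) 1) :
    0 ≤ cloverArcLength m b :=
  (intervalIntegral.integral_same : cloverArcLength m 0 = 0) ▸
    (strictMonoOn_cloverArcLength hm).monotoneOn (left_mem_Icc.2 zero_le_one) hb hb.1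

section Clover

variable {m : ℕ} {ϖ : ℝ} {φ : ℝ → ℝ}

theorem le_iff_cloverArcLength_le (hm : m ≠ 0)
    (hφ : ∀ x ∈ Icc 0 (ϖ / 2), cloverArcLength m (φ x) = x)
    (hφ01 : ∀ x ∈ Icc 0 (ϖ / 2), φ x ∈ Icc (0 : ℝ) 1) {x b : ℝ} (hx : x ∈ Icc 0 (ϖ / 2))
    (hb : b ∈ Icc (0 : ℝ) 1) : b ≤ φ x ↔ cloverArcLength m b ≤ x := by
  rw [← (strictMonoOn_cloverArcLength hm).le_iff_le hb (hφ01 x hx), hφ x hx]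

theorem monotoneOn_clover (hm : m ≠ 0)
    (hφ : ∀ x ∈ Icc 0 (ϖ / 2), cloverArcLength m (φ x) = x)
    (hφ01 : ∀ x ∈ Icc 0 (ϖ / 2), φ x ∈ Icc (0 : ℝ) 1) : MonotoneOn φ (Icc 0 (ϖ / 2)) :=
  fun x hx y hy hxy =>
    (le_iff_cloverArcLength_le hm hφ hφ01 hy (hφ01 x hx)).2 (by rwa [hφ x hx])

theorem volume_restrict_setOf_le_clover_ne_zero (hm : m ≠ 0) (hϖ : cloverArcLength m 1 = ϖ / 2)
    (hφ : ∀ x ∈ Icc 0 (ϖ / 2), cloverArcLength m (φ x) = x)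
    (hφ01 : ∀ x ∈ Icc 0 (ϖ / 2), φ x ∈ Icc (0 : ℝ) 1) {b : ℝ} (hb : b ∈ Ioo (0 : ℝ) 1) :
    volume.restrict (Ioc 0 (ϖ / 2)) {x | b ≤ φ x} ≠ 0 := by
  have hb' : b ∈ Icc (0 : ℝ) 1 := Ioo_subset_Icc_self hb
  have hlt : cloverArcLength m b < ϖ / 2 :=
    hϖ ▸ strictMonoOn_cloverArcLength hm hb' (right_mem_Icc.2 zero_le_one) hb.2
  have hnonneg := cloverArcLength_nonneg hm hb'
  have hsub : Ioc (cloverArcLength m b) (ϖ / 2) ⊆ {x | b ≤ φ x} ∩ Ioc 0 (ϖ / 2) :=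
    fun x hx => ⟨(le_iff_cloverArcLength_le hm hφ hφ01
      ⟨hnonneg.trans hx.1.le, hx.2⟩ hb').2 hx.1.le, hnonneg.trans_lt hx.1, hx.2⟩
  rw [Measure.restrict_apply' measurableSet_Ioc, ← pos_iff_ne_zero]
  exact (Real.volume_Ioc ▸ ENNReal.ofReal_pos.2 (sub_pos.2 hlt)).trans_le (measure_mono hsub)

end Clover

/-- **Limit of the ratio of consecutive clover integrals.**
Let `m ≥ 1`, `ϖ = 2 ∫_0^1 (1 - t^m)^(-1/2) dt`, `φ` the `m`-clover function, and
`I(n) = ∫_0^ϖ φ(x)^n dx`.  Then `I(n)/I(n+1) → 1` as `n → ∞`. -/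
theorem clover_integral_ratio_tendsto_one (m : ℕ) (hm : 1 ≤ m)
    (ϖ : ℝ) (hϖ : ϖ = 2 * ∫ t in (0:ℝ)..1, (1 - t ^ m) ^ (-(1/2) : ℝ))
    (φ : ℝ → ℝ)
    (hφ : ∀ x ∈ Set.Icc 0 (ϖ / 2),
      x = ∫ t in (0:ℝ)..(φ x), (1 - t ^ m) ^ (-(1/2) : ℝ))
    (hφ01 : ∀ x ∈ Set.Icc 0 (ϖ / 2), φ x ∈ Set.Icc (0:ℝ) 1)
    (hφsymm : ∀ x ∈ Set.Icc 0 ϖ, φ (ϖ - x) = φ x)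
    (I : ℕ → ℝ) (hI : ∀ n : ℕ, I n = ∫ x in (0:ℝ)..ϖ, φ x ^ n) :
    Tendsto (fun n : ℕ => I n / I (n + 1)) atTop (𝓝 1) := by
  have hm0 : m ≠ 0 := by omega
  have hϖ1 : cloverArcLength m 1 = ϖ / 2 := by rw [hϖ, cloverArcLength]; ring
  have hφ' : ∀ x ∈ Icc 0 (ϖ / 2), cloverArcLength m (φ x) = x := fun x hx => (hφ x hx).symm
  have hϖ0 : 0 ≤ ϖ / 2 := hϖ1 ▸ cloverArcLength_nonneg hm0 (right_mem_Icc.2 zero_le_one)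
  have hint : ∀ n, IntervalIntegrable (fun x => φ x ^ n) volume 0 (ϖ / 2) := fun n =>
    MonotoneOn.intervalIntegrable <| (uIcc_of_le hϖ0).symm ▸ fun x hx y hy hxy =>
      pow_le_pow_left₀ (hφ01 x hx).1 (monotoneOn_clover hm0 hφ' hφ01 hx hy hxy) n
  have hhalf : ∀ n, I n = 2 * ∫ x, φ x ^ n ∂volume.restrict (Ioc 0 (ϖ / 2)) := fun n => by
    rw [hI, integral_eq_two_mul_integral_half (fun x hx => ?_) (hint n),
      intervalIntegral.integral_of_le hϖ0]
    rw [uIcc_of_le hϖ0] at hx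
    rw [hφsymm x ⟨hx.1, by linarith [hx.2]⟩]
  simp_rw [hhalf, mul_div_mul_left _ _ (two_ne_zero' ℝ)]
  exact tendsto_integral_pow_div_integral_pow_succ (fun n => (hint n).1)
    ((ae_restrict_mem measurableSet_Ioc).mono fun _ hx => hφ01 _ (Ioc_subset_Icc_self hx))
    fun b hb => volume_restrict_setOf_le_clover_ne_zero hm0 hϖ1 hφ' hφ01 hb
end
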